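/- If h = 1, then there exists no numerical wall datum w = (a,b,c) ∈ ℤ³ with a ≥ 2. (The h = 1 subcase of Case 7 of the proof of the Main Theorem.) -/

import Mathlib

/-- The Mukai pairing on the algebraic Mukai lattice ℤ³ of a K3 surface `S` with
`Pic(S) = ℤ·H`, `H² = 2Δk²`, identifying `(r, xH, s)` with `(r, x, s)`:
`⟨(r,x,s),(r′,x′,s′)⟩ = 2Δk²xx′ − rs′ − r′s`. -/
def mukaiPair (Δ k : ℤ) (w w' : ℤ × ℤ × ℤ) : ℤ :=
  2 * Δ * k ^ 2 * w.2.1 * w'.2.1 - w.1 * w'.2.2 - w'.1 * w.2.2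

/-- The Mukai vector `v = (1, 0, −Δh²)` of the Hilbert scheme of `Δh²+1` points. -/
def mukaiV (Δ h : ℤ) : ℤ × ℤ × ℤ := (1, 0, -(Δ * h ^ 2))

/-- The slope `Γ = −2Δk²b / (Δh²a + c)` associated to `w = (a,b,c)`. -/
def wallGamma (Δ h k : ℤ) (w : ℤ × ℤ × ℤ) : ℚ :=
  ((-(2 * Δ * k ^ 2 * w.2.1) : ℤ) : ℚ) / ((Δ * h ^ 2 * w.1 + w.2.2 : ℤ) : ℚ)

/-- `w = (a,b,c) ∈ ℤ³` is a numerical wall datum (for the interior of the movable cone of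
`Hilb^{Δh²+1}(S)`) if:
(W1) `Δh²a + c ≠ 0` and `Γ := −2Δk²b/(Δh²a + c)` satisfies `2k²/(h²+k²+1) ≤ Γ < k/h`;
(W2) `Γ·b + a ≥ 0` and `−Γ·b + 1 − a ≥ 0`;
(W3) either `⟨w,w⟩ = −2` and `−Δh² ≤ ⟨w,v⟩ ≤ Δh²`, or `⟨w,w⟩ ≥ 0`, `2⟨w,w⟩ < Δh²` and
     `2⟨w,w⟩ + 1 ≤ ⟨w,v⟩ ≤ Δh²`;
(W4) `⟨w,v⟩² > 2Δh²·⟨w,w⟩`. -/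
def IsWallDatum (Δ h k : ℤ) (w : ℤ × ℤ × ℤ) : Prop :=
  Δ * h ^ 2 * w.1 + w.2.2 ≠ 0 ∧
  (2 * (k : ℚ) ^ 2 / ((h : ℚ) ^ 2 + (k : ℚ) ^ 2 + 1) ≤ wallGamma Δ h k w ∧
    wallGamma Δ h k w < (k : ℚ) / (h : ℚ)) ∧
  (0 ≤ wallGamma Δ h k w * (w.2.1 : ℚ) + (w.1 : ℚ) ∧
    0 ≤ -(wallGamma Δ h k w * (w.2.1 : ℚ)) + 1 - (w.1 : ℚ)) ∧
  ((mukaiPair Δ k w w = -2 ∧ -(Δ * h ^ 2) ≤ mukaiPair Δ k w (mukaiV Δ h) ∧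
      mukaiPair Δ k w (mukaiV Δ h) ≤ Δ * h ^ 2) ∨
    (0 ≤ mukaiPair Δ k w w ∧ 2 * mukaiPair Δ k w w < Δ * h ^ 2 ∧
      2 * mukaiPair Δ k w w + 1 ≤ mukaiPair Δ k w (mukaiV Δ h) ∧
      mukaiPair Δ k w (mukaiV Δ h) ≤ Δ * h ^ 2)) ∧
  (mukaiPair Δ k w (mukaiV Δ h)) ^ 2 > 2 * Δ * h ^ 2 * mukaiPair Δ k w w

/-!
For `h = 1` the slope conditions pin down `b`: writing `D = Δa + c`, the bound `Γ < k` reads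
`2Δk(-b) < D`; combined with `Γ·b ≤ 1 - a` it gives `a - 1 < k(-b)`, and combined with
`D = 2Δa - ⟨w,v⟩ ≤ 2Δa + Δ` it gives `k(-b) ≤ a`. Hence `k(-b) = a`, so `⟨w,v⟩ < 0` and
`⟨w,w⟩ = 2a⟨w,v⟩ ≤ -4`, which (W3) forbids.
-/

theorem mukaiPair_self (Δ k a b c : ℤ) :
    mukaiPair Δ k (a, b, c) (a, b, c) = 2 * Δ * k ^ 2 * b ^ 2 - 2 * a * c := by
  simp only [mukaiPair]; ring

theorem mukaiPair_mukaiV (Δ h k a b c : ℤ) :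
    mukaiPair Δ k (a, b, c) (mukaiV Δ h) = Δ * h ^ 2 * a - c := by
  simp only [mukaiPair, mukaiV]; ring

namespace IsWallDatum

variable {Δ h k a b c : ℤ}

theorem wallGamma_pos {w : ℤ × ℤ × ℤ} (hk : 0 < k) (hw : IsWallDatum Δ h k w) :
    0 < wallGamma Δ h k w :=
  lt_of_lt_of_le (by positivity) hw.2.1.1

theorem wallGamma_mul_snd_le (hw : IsWallDatum Δ h k (a, b, c)) :
    wallGamma Δ h k (a, b, c) * b ≤ 1 - a := by
  linarith [hw.2.2.1.2]

theorem snd_neg (hk : 0 < k) (ha : 1 < a) (hw : IsWallDatum Δ h k (a, b, c)) : b < 0 := by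
  by_contra! hb
  have hΓb : 0 ≤ wallGamma Δ h k (a, b, c) * b :=
    mul_nonneg (hw.wallGamma_pos hk).le (by exact_mod_cast hb)
  have : (1 : ℚ) < a := by exact_mod_cast ha
  linarith [hw.wallGamma_mul_snd_le]

theorem denom_pos (hΔ : 0 < Δ) (hk : 0 < k) (ha : 1 < a) (hw : IsWallDatum Δ h k (a, b, c)) :
    0 < Δ * h ^ 2 * a + c := by
  have hnum : (0 : ℚ) < ((-(2 * Δ * k ^ 2 * b) : ℤ) : ℚ) := by
    have : 0 < 2 * Δ * k ^ 2 * -b := mul_pos (by positivity) (neg_pos.mpr (hw.snd_neg hk ha))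
    exact_mod_cast this.trans_eq (by ring)
  exact_mod_cast (div_pos_iff_of_pos_left hnum).mp (hw.wallGamma_pos hk)

theorem lt_denom (hΔ : 0 < Δ) (hh : 0 < h) (hk : 0 < k) (ha : 1 < a)
    (hw : IsWallDatum Δ h k (a, b, c)) : 2 * Δ * h * k * -b < Δ * h ^ 2 * a + c := by
  have hD : (0 : ℚ) < ((Δ * h ^ 2 * a + c : ℤ) : ℚ) := by exact_mod_cast hw.denom_pos hΔ hk ha
  have hΓ := hw.2.1.2
  rw [wallGamma, div_lt_div_iff₀ hD (by exact_mod_cast hh)] at hΓ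
  have : k * (2 * Δ * h * k * -b) < k * (Δ * h ^ 2 * a + c) := by
    have : -(2 * Δ * k ^ 2 * b) * h < k * (Δ * h ^ 2 * a + c) := by exact_mod_cast hΓ
    linarith
  exact lt_of_mul_lt_mul_left this hk.le

theorem sub_one_mul_denom_le (hΔ : 0 < Δ) (hk : 0 < k) (ha : 1 < a)
    (hw : IsWallDatum Δ h k (a, b, c)) : (a - 1) * (Δ * h ^ 2 * a + c) ≤ 2 * Δ * k ^ 2 * b ^ 2 := by
  have hD : (0 : ℚ) < ((Δ * h ^ 2 * a + c : ℤ) : ℚ) := by exact_mod_cast hw.denom_pos hΔ hk ha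
  have hΓb := hw.wallGamma_mul_snd_le
  rw [wallGamma, div_mul_eq_mul_div, div_le_iff₀ hD] at hΓb
  have : -(2 * Δ * k ^ 2 * b) * b ≤ (1 - a) * (Δ * h ^ 2 * a + c) := by exact_mod_cast hΓb
  linarith

theorem mul_sub_one_lt_mul_neg_snd (hΔ : 0 < Δ) (hh : 0 < h) (hk : 0 < k) (ha : 1 < a)
    (hw : IsWallDatum Δ h k (a, b, c)) : h * (a - 1) < k * -b := by
  have hX : 0 < 2 * Δ * k * -b := mul_pos (by positivity) (neg_pos.mpr (hw.snd_neg hk ha))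
  refine lt_of_mul_lt_mul_left ?_ hX.le
  calc 2 * Δ * k * -b * (h * (a - 1)) = (a - 1) * (2 * Δ * h * k * -b) := by ring
    _ < (a - 1) * (Δ * h ^ 2 * a + c) :=
        mul_lt_mul_of_pos_left (hw.lt_denom hΔ hh hk ha) (by linarith)
    _ ≤ 2 * Δ * k ^ 2 * b ^ 2 := hw.sub_one_mul_denom_le hΔ hk ha
    _ = 2 * Δ * k * -b * (k * -b) := by ring

theorem neg_le_mukaiPair_mukaiV (hΔ : 0 ≤ Δ) {w : ℤ × ℤ × ℤ} (hw : IsWallDatum Δ h k w) :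
    -(Δ * h ^ 2) ≤ mukaiPair Δ k w (mukaiV Δ h) := by
  rcases hw.2.2.2.1 with ⟨-, hj, -⟩ | ⟨hq, -, hj, -⟩
  · exact hj
  · nlinarith

theorem two_mul_mul_neg_snd_lt (hΔ : 0 < Δ) (hh : 0 < h) (hk : 0 < k) (ha : 1 < a)
    (hw : IsWallDatum Δ h k (a, b, c)) : 2 * (k * -b) < h * (2 * a + 1) := by
  have hj := hw.neg_le_mukaiPair_mukaiV hΔ.le
  rw [mukaiPair_mukaiV] at hj
  refine lt_of_mul_lt_mul_left ?_ (by positivity : 0 ≤ Δ * h)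
  linarith [hw.lt_denom hΔ hh hk ha]

theorem neg_two_le_mukaiPair_self {w : ℤ × ℤ × ℤ} (hw : IsWallDatum Δ h k w) :
    -2 ≤ mukaiPair Δ k w w := by
  rcases hw.2.2.2.1 with ⟨hq, -⟩ | ⟨hq, -⟩ <;> omega

end IsWallDatum

theorem no_wall_datum_a_ge_two_of_h_eq_one_general (Δ h k : ℤ) (hΔ : 0 < Δ) (hh : h = 1)
    (hk : 0 < k) :
    ¬ ∃ a b c : ℤ, 2 ≤ a ∧ IsWallDatum Δ h k (a, b, c) := by
  subst hh
  rintro ⟨a, b, c, ha, hw⟩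
  have hkb : k * -b = a := by
    have h₁ := hw.mul_sub_one_lt_mul_neg_snd hΔ one_pos hk ha
    have h₂ := hw.two_mul_mul_neg_snd_lt hΔ one_pos hk ha
    omega
  have hj : Δ * a - c < 0 := by
    linear_combination hw.lt_denom hΔ one_pos hk ha - 2 * Δ * hkb
  have hq : mukaiPair Δ k (a, b, c) (a, b, c) = 2 * a * (Δ * a - c) := by
    rw [mukaiPair_self]
    linear_combination (2 * Δ) * congrArg (· ^ 2) hkb
  nlinarith [hw.neg_two_le_mukaiPair_self]

/-- The `h = 1` subcase of Case 7 of the proof of the Main Theorem: if `h = 1` then there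
is no numerical wall datum with `a ≥ 2`. -/
theorem no_wall_datum_a_ge_two_of_h_eq_one (Δ h k : ℤ) (hΔ : 0 < Δ) (hh : h = 1)
    (hk : 0 < k) (hgcd : Int.gcd h k = 1) :
    ¬ ∃ a b c : ℤ, 2 ≤ a ∧ IsWallDatum Δ h k (a, b, c) :=
  no_wall_datum_a_ge_two_of_h_eq_one_general Δ h k hΔ hh hk
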